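/- arXiv:2605.08860 — 6 statements merged into one kernel-verified Lean document; each statement's English description precedes it below -/
import Mathlib

section
/- For q ∈ (0,1) and q' with 0 < q ≤ q' ≤ 1, and any probability vector p ∈ ℝ^W_{+} with ∑ p_i = 1, one has 1 ≤ (∑_{i=1}^W p_i^q)^{(q−q')/(q−1)} · (∑_{i=1}^W p_i^{q'}) ≤ W^{1−q}. -/
open Finset

/-!
Both factors are power sums `∑ pᵢ ^ r` with `r ≤ 1`. Such a sum is at least `∑ pᵢ = 1`
because `x ≤ x ^ r` on `[0, 1]`, and at most `W ^ (1 - r)` by Jensen's inequality for the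
concave map `x ↦ x ^ r`. Since `(1 - q) α + (1 - q') = 1 - q` for `α = (q - q') / (q - 1)`,
the two upper bounds combine to `W ^ (1 - q)`.
-/

namespace Real

variable {ι : Type*} (s : Finset ι) {f : ι → ℝ} {r : ℝ}

theorem sum_le_sum_rpow_of_sum_le_one (hf : ∀ i ∈ s, 0 ≤ f i) (hsum : ∑ i ∈ s, f i ≤ 1)
    (hr : r ≤ 1) : ∑ i ∈ s, f i ≤ ∑ i ∈ s, f i ^ r :=
  sum_le_sum fun i hi =>
    self_le_rpow_of_le_one (hf i hi) ((single_le_sum hf hi).trans hsum) hr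

theorem sum_rpow_le_card_rpow_mul_rpow_sum (hf : ∀ i ∈ s, 0 ≤ f i) (hr0 : 0 ≤ r)
    (hr1 : r ≤ 1) : ∑ i ∈ s, f i ^ r ≤ (#s : ℝ) ^ (1 - r) * (∑ i ∈ s, f i) ^ r := by
  rcases s.eq_empty_or_nonempty with rfl | hs
  · simp only [sum_empty]; positivity
  have hn : (0 : ℝ) < #s := by exact_mod_cast hs.card_pos
  have jensen : ∑ i ∈ s, (#s : ℝ)⁻¹ • f i ^ r ≤ (∑ i ∈ s, (#s : ℝ)⁻¹ • f i) ^ r :=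
    (concaveOn_rpow hr0 hr1).le_map_sum (fun _ _ => by positivity)
      (by simp [hn.ne']) hf
  simp only [smul_eq_mul, ← mul_sum] at jensen
  rw [mul_rpow (by positivity) (sum_nonneg hf), inv_rpow hn.le] at jensen
  calc ∑ i ∈ s, f i ^ r = #s * ((#s : ℝ)⁻¹ * ∑ i ∈ s, f i ^ r) := by field_simp
    _ ≤ #s * ((#s : ℝ) ^ r)⁻¹ * (∑ i ∈ s, f i) ^ r := by
      rw [mul_assoc]; gcongr
    _ = (#s : ℝ) ^ (1 - r) * (∑ i ∈ s, f i) ^ r := by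
      rw [rpow_sub hn, rpow_one, div_eq_mul_inv]

end Real

theorem escort_factor_bounds_general (W : ℕ) (q q' : ℝ)
    (hq0 : 0 < q) (hq1 : q < 1) (hqq' : q ≤ q') (hq'1 : q' ≤ 1)
    (p : Fin W → ℝ) (hp : ∀ i, 0 ≤ p i) (hsum : ∑ i, p i = 1) :
    1 ≤ (∑ i, p i ^ q) ^ ((q - q') / (q - 1)) * (∑ i, p i ^ q') ∧
      (∑ i, p i ^ q) ^ ((q - q') / (q - 1)) * (∑ i, p i ^ q') ≤ (W : ℝ) ^ (1 - q) := by
  have one_le_sum {r : ℝ} (hr : r ≤ 1) : 1 ≤ ∑ i, p i ^ r :=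
    hsum ▸ Real.sum_le_sum_rpow_of_sum_le_one _ (fun i _ => hp i) hsum.le hr
  have sum_le_card {r : ℝ} (hr0 : 0 ≤ r) (hr1 : r ≤ 1) :
      ∑ i, p i ^ r ≤ (W : ℝ) ^ (1 - r) := by
    simpa [hsum] using Real.sum_rpow_le_card_rpow_mul_rpow_sum univ (fun i _ => hp i) hr0 hr1
  set α := (q - q') / (q - 1)
  have hα : 0 ≤ α := div_nonneg_of_nonpos (by linarith) (by linarith)
  have hexp : (1 - q) * α + (1 - q') = 1 - q := by
    simp only [α]; field_simp [show q - 1 ≠ 0 by linarith]; ring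
  have hA : 1 ≤ ∑ i, p i ^ q := one_le_sum hq1.le
  have hB : 1 ≤ ∑ i, p i ^ q' := one_le_sum hq'1
  refine ⟨one_le_mul_of_one_le_of_one_le (Real.one_le_rpow hA hα) hB, ?_⟩
  calc (∑ i, p i ^ q) ^ α * ∑ i, p i ^ q'
      ≤ ((W : ℝ) ^ (1 - q)) ^ α * (W : ℝ) ^ (1 - q') :=
        mul_le_mul (Real.rpow_le_rpow (by linarith) (sum_le_card hq0.le hq1.le) hα)
          (sum_le_card (by linarith) hq'1) (by linarith) (by positivity)
    _ = (W : ℝ) ^ (1 - q) := by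
      rw [← Real.rpow_mul W.cast_nonneg, ← Real.rpow_add' W.cast_nonneg (by linarith), hexp]

theorem escort_factor_bounds (W : ℕ) (hW : 1 ≤ W) (q q' : ℝ)
    (hq0 : 0 < q) (hq1 : q < 1) (hqq' : q ≤ q') (hq'1 : q' ≤ 1)
    (p : Fin W → ℝ) (hp : ∀ i, 0 ≤ p i) (hsum : ∑ i, p i = 1) :
    1 ≤ (∑ i, p i ^ q) ^ ((q - q') / (q - 1)) * (∑ i, p i ^ q') ∧
      (∑ i, p i ^ q) ^ ((q - q') / (q - 1)) * (∑ i, p i ^ q') ≤ (W : ℝ) ^ (1 - q) :=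
  escort_factor_bounds_general W q q' hq0 hq1 hqq' hq'1 p hp hsum
end

section
/- Let W ≥ 2, q ∈ (0,1), q' = 1, e_1 < e_W, and U ∈ (e_1, e_W). Then the maximizer of S_q(p) over {p ∈ ℝ^W : p_i ≥ 0, ∑ p_i = 1, ∑ p_i e_i = U} exists, is unique, and has all coordinates strictly positive. -/
open Finset

/-- Tsallis entropy `S_q(p) = k (∑ i, p_i^q − 1)/(1−q)` (real power). -/
noncomputable def tsallisEntropy (k q : ℝ) {ι : Type*} [Fintype ι] (p : ι → ℝ) : ℝ :=
  k * ((∑ i, p i ^ q) - 1) / (1 - q)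

/-!
Since `k > 0` and `q < 1`, maximizing `S_q` is the same as maximizing `F p = ∑ i, p i ^ q`,
a strictly concave function on the nonnegative orthant. The feasible set is a nonempty
compact convex set, so a maximizer exists, and by strict concavity it is unique. It cannot
have a zero coordinate `p i = 0`: the feasible set contains a strictly positive point `s`, and
along the segment from `p` to `s` the `i`-th term grows like `t ^ q` while the others lose
only `O(t)`.
-/

open Set Filter Topology

section

variable {ι : Type*} [Fintype ι] {q : ℝ}

theorem isMaxOn_tsallisEntropy_iff {k : ℝ} (hk : 0 < k) (hq : q < 1) {K : Set (ι → ℝ)}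
    {p : ι → ℝ} :
    IsMaxOn (tsallisEntropy k q) K p ↔ IsMaxOn (fun p => ∑ i, p i ^ q) K p :=
  forall₂_congr fun _ _ => by
    rw [mem_ofPred_eq, mem_ofPred_eq, tsallisEntropy, tsallisEntropy,
      div_le_div_iff_of_pos_right (by linarith), mul_le_mul_iff_right₀ hk, sub_le_sub_iff_right]

theorem strictConcaveOn_sum_rpow (hq0 : 0 < q) (hq1 : q < 1) :
    StrictConcaveOn ℝ (Ici 0) fun p : ι → ℝ => ∑ i, p i ^ q := by
  refine ⟨convex_Ici 0, fun x hx y hy hxy a b ha hb hab => ?_⟩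
  obtain ⟨j, hj⟩ := Function.ne_iff.1 hxy
  simp only [smul_eq_mul, mul_sum, ← sum_add_distrib, Pi.add_apply, Pi.smul_apply]
  refine sum_lt_sum (fun i _ => ?_) ⟨j, mem_univ j, ?_⟩
  · exact (Real.concaveOn_rpow hq0.le hq1.le).2 (hx i) (hy i) ha.le hb.le hab
  · exact (Real.strictConcaveOn_rpow hq0 hq1).2 (hx j) (hy j) hj ha hb hab

theorem exists_mem_segment_sum_rpow_lt (hq0 : 0 < q) (hq1 : q < 1) {p s : ι → ℝ}
    (hp : 0 ≤ p) (hs : 0 ≤ s) {i : ι} (hpi : p i = 0) (hsi : 0 < s i) :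
    ∃ x ∈ segment ℝ p s, ∑ j, p j ^ q < ∑ j, x j ^ q := by
  set F := ∑ j, p j ^ q
  have hc : 0 < s i ^ q := Real.rpow_pos_of_pos hsi q
  have hlim : Tendsto (fun t : ℝ => t ^ (1 - q) * F) (𝓝[>] 0) (𝓝 0) := by
    have : ContinuousAt (fun t : ℝ => t ^ (1 - q) * F) 0 :=
      (Real.continuousAt_rpow_const 0 (1 - q) (Or.inr (by linarith))).mul continuousAt_const
    simpa [Real.zero_rpow (by linarith : 1 - q ≠ 0)] using
      this.tendsto.mono_left nhdsWithin_le_nhds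
  obtain ⟨t, hsmall, ht0, ht1⟩ := ((hlim.eventually (gt_mem_nhds hc)).and
    (Ioo_mem_nhdsGT one_pos)).exists
  refine ⟨(1 - t) • p + t • s, ⟨1 - t, t, by linarith, ht0.le, by ring, rfl⟩, ?_⟩
  set x := (1 - t) • p + t • s
  have hx : ∀ j, x j = (1 - t) * p j + t * s j := fun j => rfl
  have hterm : ∀ j, 0 ≤ x j ^ q - (1 - t) * p j ^ q := fun j => by
    have := (Real.concaveOn_rpow hq0.le hq1.le).2 (hp j) (hs j) (sub_nonneg.2 ht1.le) ht0.le
      (by ring)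
    simp only [smul_eq_mul] at this
    rw [hx]
    nlinarith [Real.rpow_nonneg (hs j) q]
  have hxi : x i ^ q = t ^ q * s i ^ q := by
    rw [hx, hpi, mul_zero, zero_add, Real.mul_rpow ht0.le hsi.le]
  have hgain : t * F < t ^ q * s i ^ q := by
    calc t * F = t ^ q * (t ^ (1 - q) * F) := by
          rw [← mul_assoc, ← Real.rpow_add ht0, add_sub_cancel, Real.rpow_one]
      _ < t ^ q * s i ^ q := mul_lt_mul_of_pos_left hsmall (Real.rpow_pos_of_pos ht0 q)
  have hsum := single_le_sum (fun j _ => hterm j) (mem_univ i)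
  rw [hxi, hpi, Real.zero_rpow hq0.ne', mul_zero, sub_zero, sum_sub_distrib, ← mul_sum] at hsum
  linarith

theorem pos_of_isMaxOn_sum_rpow (hq0 : 0 < q) (hq1 : q < 1) {K : Set (ι → ℝ)}
    (hK : Convex ℝ K) (hK0 : K ⊆ Ici 0) {p s : ι → ℝ} (hp : p ∈ K)
    (hmax : IsMaxOn (fun p => ∑ i, p i ^ q) K p) (hs : s ∈ K) {i : ι} (hsi : 0 < s i) : 0 < p i := by
  refine (hK0 hp i).lt_of_ne' fun hpi => ?_
  obtain ⟨x, hx, hlt⟩ := exists_mem_segment_sum_rpow_lt hq0 hq1 (hK0 hp) (hK0 hs) hpi hsi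
  exact (hmax (hK.segment_subset hp hs hx)).not_gt hlt

variable (e : ι → ℝ) (U : ℝ)

def meanConstrainedSimplex : Set (ι → ℝ) :=
  {p | (∀ i, 0 ≤ p i) ∧ ∑ i, p i = 1 ∧ ∑ i, p i * e i = U}

theorem meanConstrainedSimplex_eq :
    meanConstrainedSimplex e U = stdSimplex ℝ ι ∩ {p | ∑ i, p i * e i = U} := by
  ext p
  exact and_assoc.symm

theorem convex_meanConstrainedSimplex : Convex ℝ (meanConstrainedSimplex e U) := by
  rw [meanConstrainedSimplex_eq]
  refine convex_stdSimplex ℝ ι |>.inter (convex_hyperplane ?_ U)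
  exact ⟨fun p p' => by simp [add_mul, sum_add_distrib],
    fun c p => by simp [mul_sum, mul_assoc]⟩

theorem isCompact_meanConstrainedSimplex : IsCompact (meanConstrainedSimplex e U) := by
  rw [meanConstrainedSimplex_eq]
  exact (isCompact_stdSimplex ℝ ι).inter_right <|
    isClosed_eq (by fun_prop) continuous_const

theorem meanConstrainedSimplex_subset_Ici : meanConstrainedSimplex e U ⊆ Ici 0 :=
  fun _ hp => hp.1

variable {e U}

theorem exists_pos_mem_meanConstrainedSimplex {a b : ι} (ha : e a < U) (hb : U < e b) :
    ∃ s ∈ meanConstrainedSimplex e U, ∀ i, 0 < s i := by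
  classical
  have hn : (0 : ℝ) < Fintype.card ι := Nat.cast_pos.2 (Fintype.card_pos_iff.2 ⟨a⟩)
  set m := (∑ i, e i) / Fintype.card ι
  -- mix the uniform distribution, of mean `m`, with a point mass on the other side of `U`
  obtain ⟨c, t, ht0, ht1, hU⟩ : ∃ c t, 0 ≤ t ∧ t < 1 ∧ (1 - t) * m + t * e c = U := by
    rcases le_or_gt m U with h | h
    · refine ⟨b, (U - m) / (e b - m), div_nonneg (by linarith) (by linarith),
        (div_lt_one (by linarith)).2 (by linarith), ?_⟩
      field_simp [(by linarith : e b - m ≠ 0)]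
      ring
    · refine ⟨a, (m - U) / (m - e a), div_nonneg (by linarith) (by linarith),
        (div_lt_one (by linarith)).2 (by linarith), ?_⟩
      field_simp [(by linarith : m - e a ≠ 0)]
      ring
  set s : ι → ℝ := fun i => (1 - t) / Fintype.card ι + if i = c then t else 0
  have hs : ∀ i, 0 < s i := fun i =>
    add_pos_of_pos_of_nonneg (div_pos (by linarith) hn) (by split_ifs <;> simp [ht0])
  refine ⟨s, ⟨fun i => (hs i).le, ?_, ?_⟩, hs⟩
  · simp only [s, sum_add_distrib, sum_const, card_univ, nsmul_eq_mul, sum_ite_eq',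
      Finset.mem_univ, if_true]
    field_simp
    ring
  · simp only [s, m, add_mul, ite_mul, zero_mul, sum_add_distrib, ← mul_sum, sum_ite_eq',
      Finset.mem_univ, if_true, ← hU]
    ring

end

theorem unique_positive_maximizer_linear_constraint
    (W : ℕ) (hW : 2 ≤ W) (k q : ℝ) (hk : 0 < k) (hq0 : 0 < q) (hq1 : q < 1)
    (e : Fin W → ℝ)
    (U : ℝ) (hU : e ⟨0, by omega⟩ < U) (hU' : U < e ⟨W - 1, by omega⟩) :
    ∃ p : Fin W → ℝ,
      ((∀ i, 0 ≤ p i) ∧ ∑ i, p i = 1 ∧ ∑ i, p i * e i = U) ∧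
      (∀ p' : Fin W → ℝ,
        ((∀ i, 0 ≤ p' i) ∧ ∑ i, p' i = 1 ∧ ∑ i, p' i * e i = U) →
          tsallisEntropy k q p' ≤ tsallisEntropy k q p) ∧
      (∀ i, 0 < p i) ∧
      (∀ p'' : Fin W → ℝ,
        ((∀ i, 0 ≤ p'' i) ∧ ∑ i, p'' i = 1 ∧ ∑ i, p'' i * e i = U) →
        (∀ p' : Fin W → ℝ,
          ((∀ i, 0 ≤ p' i) ∧ ∑ i, p' i = 1 ∧ ∑ i, p' i * e i = U) →
            tsallisEntropy k q p' ≤ tsallisEntropy k q p'') →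
        p'' = p) := by
  have hK := convex_meanConstrainedSimplex e U
  have hK0 := meanConstrainedSimplex_subset_Ici e U
  obtain ⟨s, hsK, hs⟩ := exists_pos_mem_meanConstrainedSimplex hU hU'
  obtain ⟨p, hpK, hpmax⟩ := (isCompact_meanConstrainedSimplex e U).exists_isMaxOn ⟨s, hsK⟩
    (continuous_finsetSum _ fun i _ =>
      (continuous_apply i).rpow_const fun _ => Or.inr hq0.le).continuousOn
  refine ⟨p, hpK, (isMaxOn_tsallisEntropy_iff hk hq1).2 hpmax,
    fun i => pos_of_isMaxOn_sum_rpow hq0 hq1 hK hK0 hpK hpmax hsK (hs i),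
    fun p'' hp'' hmax'' => ?_⟩
  exact ((strictConcaveOn_sum_rpow hq0 hq1).subset hK0 hK).eq_of_isMaxOn
    ((isMaxOn_tsallisEntropy_iff hk hq1).1 hmax'') hpmax hp'' hpK
end

section
/- Let q > 1, q' = 1, e_1 ≤ … ≤ e_W, U ∈ (e_1,e_W), and let p̃ be a maximizer of S_q over {p : p_i ≥ 0, ∑ p_i = 1, ∑ p_i e_i = U}. If p̃_i > 0 and p̃_k > 0 with i < j < k, then p̃_j > 0. In other words, the support of the optimizer is an interval of indices. -/
/-!
If `p j = 0` while `p i, p l > 0` with `i < j < l`, then `e j` lies between `e i` and `e l`, so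
moving mass `a t` from `i` and `b t` from `l` onto `j` (with `a + b = 1`, `a e i + b e l = e j`)
keeps the distribution feasible for small `t > 0`. For `q > 1` the map `x ↦ x ^ q` has zero slope
at `0` but positive slope at `p i` and `p l`, so `∑ p_m ^ q` strictly decreases to first order in
`t`; as `k / (1 - q) < 0`, the Tsallis entropy strictly increases, contradicting maximality.
-/

open Finset

open Filter Topology

theorem HasDerivAt.eventually_lt_of_neg {f : ℝ → ℝ} {f' x : ℝ} (hf : HasDerivAt f f' x)
    (hf' : f' < 0) : ∀ᶠ y in 𝓝[>] x, f y < f x := by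
  filter_upwards [hf.hasDerivWithinAt.limsup_slope_le' (lt_irrefl x) hf', self_mem_nhdsWithin]
    with y hslope (hxy : x < y)
  rw [slope_def_field, div_neg_iff] at hslope
  rcases hslope with ⟨-, h⟩ | ⟨h, -⟩ <;> linarith

section Perturbation

variable {ι : Type*} [Fintype ι] {p d : ι → ℝ}

theorem eventually_nonneg_add_smul (hp : 0 ≤ p) (hd : ∀ m, p m = 0 → 0 ≤ d m) :
    ∀ᶠ t in 𝓝[>] (0 : ℝ), 0 ≤ p + t • d := by
  simp only [Pi.le_def, eventually_all]
  intro m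
  rcases (hp m).eq_or_lt with h | h
  · filter_upwards [self_mem_nhdsWithin] with t (ht : 0 < t)
    simpa [← h] using mul_nonneg ht.le (hd m h.symm)
  · have hcont : Tendsto (fun t : ℝ => p m + t * d m) (𝓝[>] 0) (𝓝 (p m)) :=
      tendsto_nhdsWithin_of_tendsto_nhds (Continuous.tendsto' (by fun_prop) 0 _ (by simp))
    filter_upwards [hcont.eventually (eventually_gt_nhds h)] with t ht
    simpa using ht.le

theorem hasDerivAt_sum_rpow_add_smul {q : ℝ} (hq : 1 ≤ q) :
    HasDerivAt (fun t : ℝ => ∑ m, (p + t • d) m ^ q) (∑ m, d m * (q * p m ^ (q - 1))) 0 := by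
  refine HasDerivAt.fun_sum fun m _ => ?_
  have h := (((hasDerivAt_id (0 : ℝ)).mul_const (d m)).const_add (p m)).rpow_const (Or.inr hq)
  simp only [id, zero_mul, add_zero, one_mul] at h
  exact h.congr_deriv (by ring)

end Perturbation

theorem tsallisEntropy_lt_of_sum_rpow_lt {ι : Type*} [Fintype ι] {k q : ℝ} {p p' : ι → ℝ}
    (hk : 0 < k) (hq : 1 < q) (h : ∑ m, p m ^ q < ∑ m, p' m ^ q) :
    tsallisEntropy k q p' < tsallisEntropy k q p := by
  unfold tsallisEntropy
  exact div_lt_div_of_neg_of_lt (by linarith) (by gcongr)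

section MassTransfer

variable {ι : Type*} [DecidableEq ι]

def massTransfer (i j l : ι) (a b : ℝ) : ι → ℝ :=
  Pi.single j 1 - a • Pi.single i 1 - b • Pi.single l 1

theorem sum_massTransfer_mul [Fintype ι] (i j l : ι) (a b : ℝ) (f : ι → ℝ) :
    ∑ m, massTransfer i j l a b m * f m = f j - a * f i - b * f l := by
  simp [massTransfer, sub_mul, Finset.sum_sub_distrib, Pi.single_apply]

theorem massTransfer_apply_nonneg {i j l m : ι} (a b : ℝ) (hmi : m ≠ i) (hml : m ≠ l) :
    0 ≤ massTransfer i j l a b m := by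
  simp only [massTransfer, Pi.sub_apply, Pi.smul_apply, Pi.single_apply, hmi, hml, if_false,
    smul_zero, sub_zero]
  split_ifs <;> norm_num

end MassTransfer

theorem sum_add_smul_mul {ι : Type*} [Fintype ι] (p d f : ι → ℝ) (t : ℝ) :
    ∑ m, (p + t • d) m * f m = ∑ m, p m * f m + t * ∑ m, d m * f m := by
  simp [add_mul, Finset.sum_add_distrib, Finset.mul_sum, mul_assoc]

theorem support_interval_q_gt_one (W : ℕ) (k q : ℝ)
    (hk : 0 < k) (hq : 1 < q)
    (e : Fin W → ℝ) (he : Monotone e)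
    (U : ℝ)
    (p : Fin W → ℝ)
    (hfeas : (∀ i, 0 ≤ p i) ∧ ∑ i, p i = 1 ∧ ∑ i, p i * e i = U)
    (hmax : ∀ p' : Fin W → ℝ,
      ((∀ i, 0 ≤ p' i) ∧ ∑ i, p' i = 1 ∧ ∑ i, p' i * e i = U) →
        tsallisEntropy k q p' ≤ tsallisEntropy k q p)
    (i j l : Fin W) (hij : i < j) (hjl : j < l)
    (hpi : 0 < p i) (hpl : 0 < p l) :
    0 < p j := by
  obtain ⟨hp_nonneg, hp_sum, hp_energy⟩ := hfeas
  by_contra! hpj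
  replace hpj : p j = 0 := le_antisymm hpj (hp_nonneg j)
  obtain ⟨a, b, ha, hb, hab, hej⟩ : e j ∈ segment ℝ (e i) (e l) := by
    rw [segment_eq_Icc (he (hij.trans hjl).le)]
    exact ⟨he hij.le, he hjl.le⟩
  set d := massTransfer i j l a b
  have hd_nonneg : ∀ m, p m = 0 → 0 ≤ d m := fun m hm =>
    massTransfer_apply_nonneg a b (by rintro rfl; linarith) (by rintro rfl; linarith)
  have hd_deriv : ∑ m, d m * (q * p m ^ (q - 1)) < 0 := by
    have hxi : 0 < q * p i ^ (q - 1) := by positivity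
    have hxl : 0 < q * p l ^ (q - 1) := by positivity
    have hpos : 0 < a * (q * p i ^ (q - 1)) + b * (q * p l ^ (q - 1)) :=
      convex_Ioi (0 : ℝ) hxi hxl ha hb hab
    rw [sum_massTransfer_mul, hpj, Real.zero_rpow (by linarith), mul_zero]
    linarith
  obtain ⟨t, ht_nonneg, ht_lt⟩ := ((eventually_nonneg_add_smul hp_nonneg hd_nonneg).and
    ((hasDerivAt_sum_rpow_add_smul hq.le).eventually_lt_of_neg hd_deriv)).exists
  have hfeas' : (∀ m, 0 ≤ (p + t • d) m) ∧ ∑ m, (p + t • d) m = 1 ∧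
      ∑ m, (p + t • d) m * e m = U := by
    refine ⟨ht_nonneg, ?_, ?_⟩
    · have h := sum_add_smul_mul p d 1 t
      rw [sum_massTransfer_mul] at h
      simpa [hp_sum, sub_sub, hab] using h
    · rw [sum_add_smul_mul, sum_massTransfer_mul, hp_energy, ← hej, smul_eq_mul, smul_eq_mul]
      ring
  rw [zero_smul, add_zero] at ht_lt
  exact (hmax _ hfeas').not_gt (tsallisEntropy_lt_of_sum_rpow_lt hk hq ht_lt)
end

section
/- Let q = q' ∈ (0,1), e_1 ≤ … ≤ e_W, U ∈ (e_1,e_W), and let p̃ be a maximizer of S_q over {p : p_i ≥ 0, ∑ p_i = 1, ∑ p_i^q (e_i − U) = 0}. If p̃_i > 0 and p̃_k > 0 with i < j < k, then p̃_j > 0. -/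
/-!
In escort coordinates `x n = p n ^ q` the energy constraint becomes linear, the normalisation
becomes `∑ x n ^ (1/q) = 1`, and `S_q` is increasing in `∑ x n`. If `p j = 0` while `p i` and
`p l` are positive, move escort mass `t` to `j`, taking it from `i` and `l` in the proportions that
write `e j` as a convex combination of `e i` and `e l`. This keeps `∑ x n` and the energy
constraint, while `∑ x n ^ (1/q)` decreases to first order in `t`: the gain `t ^ (1/q)` at `j` is of
higher order since `1/q > 1`. Renormalising multiplies every escort weight by a factor `> 1`, so
`S_q` strictly increases, contradicting maximality.
-/

open Finset

open Filter Topology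

theorem HasDerivAt.eventually_lt_of_deriv_neg {f : ℝ → ℝ} {f' x : ℝ} (hf : HasDerivAt f f' x)
    (hf' : f' < 0) : ∀ᶠ z in 𝓝[>] x, f z < f x := by
  filter_upwards [hf.hasDerivWithinAt.limsup_slope_le' (lt_irrefl x) hf', self_mem_nhdsWithin]
    with z hslope hz
  rw [slope_def_field, div_neg_iff] at hslope
  rcases hslope with ⟨-, hzx⟩ | ⟨hfz, -⟩
  · exact absurd hz.out (not_lt.2 (sub_neg.1 hzx).le)
  · linarith

theorem Real.rpow_inv_div_rpow {x s q : ℝ} (hx : 0 ≤ x) (hs : 0 ≤ s) (hq : q ≠ 0) :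
    (x ^ q⁻¹ / s) ^ q = x / s ^ q := by
  rw [Real.div_rpow (Real.rpow_nonneg hx _) hs, Real.rpow_inv_rpow hx hq]

section

variable {ι : Type*} [Fintype ι]

theorem hasDerivAt_sum_rpow_add_mul (x D : ι → ℝ) {r : ℝ} (hr : 1 ≤ r) (t : ℝ) :
    HasDerivAt (fun s => ∑ n, (x n + s * D n) ^ r)
      (∑ n, D n * r * (x n + t * D n) ^ (r - 1)) t :=
  HasDerivAt.fun_sum fun n _ =>
    (((hasDerivAt_id t).mul_const (D n)).const_add (x n)).rpow_const (Or.inr hr) |>.congr_deriv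
      (by simp)

theorem eventually_nonneg_add_mul {x D : ι → ℝ} (hx : ∀ n, 0 ≤ x n)
    (hD : ∀ n, D n < 0 → 0 < x n) : ∀ᶠ t in 𝓝[>] 0, ∀ n, 0 ≤ x n + t * D n := by
  refine eventually_all.2 fun n => ?_
  rcases lt_or_ge (D n) 0 with hDn | hDn
  · have hcont : Continuous fun t : ℝ => x n + t * D n := by fun_prop
    have hx0 : (0 : ℝ) < x n + 0 * D n := by simpa using hD n hDn
    exact (eventually_nhdsWithin_of_eventually_nhds
      (hcont.continuousAt.eventually (lt_mem_nhds hx0))).mono fun t ht => ht.le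
  · filter_upwards [self_mem_nhdsWithin] with t ht
    exact add_nonneg (hx n) (mul_nonneg (le_of_lt ht) hDn)

theorem tsallisEntropy_lt_tsallisEntropy {k q : ℝ} (hk : 0 < k) (hq : q < 1) {p p' : ι → ℝ}
    (h : ∑ i, p i ^ q < ∑ i, p' i ^ q) : tsallisEntropy k q p < tsallisEntropy k q p' := by
  unfold tsallisEntropy
  gcongr

def escortConstraintSet (q : ℝ) (e : ι → ℝ) (U : ℝ) : Set (ι → ℝ) :=
  {p | (∀ i, 0 ≤ p i) ∧ ∑ i, p i = 1 ∧ ∑ i, p i ^ q * (e i - U) = 0}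

/-- The distribution whose escort weights `p n ^ q` are proportional to `y`. -/
noncomputable def ofEscort (q : ℝ) (y : ι → ℝ) (n : ι) : ℝ :=
  y n ^ q⁻¹ / ∑ m, y m ^ q⁻¹

variable {q : ℝ} {y : ι → ℝ}

theorem ofEscort_rpow (hq : q ≠ 0) (hy : ∀ n, 0 ≤ y n) (n : ι) :
    ofEscort q y n ^ q = y n / (∑ m, y m ^ q⁻¹) ^ q :=
  Real.rpow_inv_div_rpow (hy n) (sum_nonneg fun m _ => Real.rpow_nonneg (hy m) _) hq

theorem sum_rpow_ofEscort (hq : q ≠ 0) (hy : ∀ n, 0 ≤ y n) :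
    ∑ n, ofEscort q y n ^ q = (∑ n, y n) / (∑ m, y m ^ q⁻¹) ^ q := by
  simp_rw [ofEscort_rpow hq hy, ← sum_div]

theorem ofEscort_mem_escortConstraintSet (hq : q ≠ 0) (hy : ∀ n, 0 ≤ y n)
    (hS : ∑ m, y m ^ q⁻¹ ≠ 0) {e : ι → ℝ} {U : ℝ} (hyU : ∑ n, y n * (e n - U) = 0) :
    ofEscort q y ∈ escortConstraintSet q e U := by
  refine ⟨fun n => div_nonneg (Real.rpow_nonneg (hy n) _)
    (sum_nonneg fun m _ => Real.rpow_nonneg (hy m) _), ?_, ?_⟩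
  · simp only [ofEscort, ← sum_div, div_self hS]
  · simp_rw [ofEscort_rpow hq hy, div_mul_eq_mul_div, ← sum_div, hyU, zero_div]

theorem sum_rpow_pos_of_sum_pos {p : ι → ℝ} (hp : ∀ n, 0 ≤ p n) (hsum : 0 < ∑ n, p n) (q : ℝ) :
    0 < ∑ n, p n ^ q := by
  obtain ⟨n, -, hn⟩ := exists_lt_of_sum_lt (by simpa using hsum : ∑ _n : ι, (0 : ℝ) < ∑ n, p n)
  exact sum_pos' (fun m _ => Real.rpow_nonneg (hp m) q) ⟨n, mem_univ n, Real.rpow_pos_of_pos hn q⟩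

theorem exists_sum_rpow_inv_add_mul_lt_one (hq0 : 0 < q) (hq1 : q < 1) {p D : ι → ℝ}
    (hp0 : ∀ n, 0 ≤ p n) (hp1 : ∑ n, p n = 1) (hDp : ∀ n, D n < 0 → 0 < p n)
    (hneg : ∑ n, D n * p n ^ (1 - q) < 0) :
    ∃ t, (∀ n, 0 ≤ p n ^ q + t * D n) ∧ 0 < ∑ n, (p n ^ q + t * D n) ^ q⁻¹ ∧
      ∑ n, (p n ^ q + t * D n) ^ q⁻¹ < 1 := by
  set F : ℝ → ℝ := fun s => ∑ n, (p n ^ q + s * D n) ^ q⁻¹ with hF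
  have hF0 : F 0 = 1 := by simp [hF, Real.rpow_rpow_inv (hp0 _) hq0.ne', hp1]
  have hderiv : HasDerivAt F (q⁻¹ * ∑ n, D n * p n ^ (1 - q)) 0 := by
    refine (hasDerivAt_sum_rpow_add_mul _ D (one_le_inv₀ hq0 |>.2 hq1.le) 0).congr_deriv ?_
    rw [mul_sum]
    refine sum_congr rfl fun n _ => ?_
    rw [zero_mul, add_zero, ← Real.rpow_mul (hp0 n), mul_sub, mul_inv_cancel₀ hq0.ne', mul_one]
    ring
  have hlt := hderiv.eventually_lt_of_deriv_neg (mul_neg_of_pos_of_neg (inv_pos.2 hq0) hneg)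
  rw [hF0] at hlt
  have hpos : ∀ᶠ s in 𝓝[>] 0, 0 < F s := nhdsWithin_le_nhds <|
    hderiv.continuousAt.eventually (lt_mem_nhds (hF0 ▸ one_pos))
  have hnonneg := eventually_nonneg_add_mul (fun n => Real.rpow_nonneg (hp0 n) q)
    fun n hn => Real.rpow_pos_of_pos (hDp n hn) q
  exact (hnonneg.and (hpos.and hlt)).exists

theorem sum_rpow_one_sub_mul_nonneg_of_isMaxOn {k : ℝ} (hk : 0 < k) (hq0 : 0 < q) (hq1 : q < 1)
    {e : ι → ℝ} {U : ℝ} {p : ι → ℝ} (hp : p ∈ escortConstraintSet q e U)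
    (hmax : IsMaxOn (tsallisEntropy k q) (escortConstraintSet q e U) p) {D : ι → ℝ}
    (hD : ∑ n, D n = 0) (hDe : ∑ n, D n * e n = 0) (hDp : ∀ n, D n < 0 → 0 < p n) :
    0 ≤ ∑ n, D n * p n ^ (1 - q) := by
  obtain ⟨hp0, hp1, hpU⟩ := hp
  by_contra! hneg
  obtain ⟨t, hy0, hFt0, hFt⟩ := exists_sum_rpow_inv_add_mul_lt_one hq0 hq1 hp0 hp1 hDp hneg
  set y : ι → ℝ := fun n => p n ^ q + t * D n with hy
  have hDU : ∑ n, D n * (e n - U) = 0 := by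
    simp only [mul_sub, sum_sub_distrib, ← sum_mul, hD, hDe, zero_mul, sub_zero]
  have hyU : ∑ n, y n * (e n - U) = 0 := by
    simpa only [hy, add_mul, sum_add_distrib, mul_assoc, ← mul_sum, hDU, mul_zero, add_zero]
  have hy_sum : ∑ n, y n = ∑ n, p n ^ q := by simp [hy, sum_add_distrib, ← mul_sum, hD]
  have hmem := ofEscort_mem_escortConstraintSet hq0.ne' hy0 hFt0.ne' hyU
  have hincr : ∑ n, p n ^ q < ∑ n, ofEscort q y n ^ q := by
    rw [sum_rpow_ofEscort hq0.ne' hy0, hy_sum, lt_div_iff₀ (Real.rpow_pos_of_pos hFt0 q)]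
    exact mul_lt_of_lt_one_right (sum_rpow_pos_of_sum_pos hp0 (hp1 ▸ one_pos) q)
      (Real.rpow_lt_one hFt0.le hFt hq0)
  exact (tsallisEntropy_lt_tsallisEntropy hk hq1 hincr).not_ge (isMaxOn_iff.1 hmax _ hmem)

theorem sum_single_sub_smul_single_mul [DecidableEq ι] (i j l : ι) (s t : ℝ) (f : ι → ℝ) :
    ∑ n, (Pi.single j 1 - s • Pi.single i 1 - t • Pi.single l 1 : ι → ℝ) n * f n =
      f j - s * f i - t * f l := by
  simp [sub_mul, sum_sub_distrib, Pi.single_apply]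

end

theorem support_interval_escort (W : ℕ) (k q : ℝ)
    (hk : 0 < k) (hq0 : 0 < q) (hq1 : q < 1)
    (e : Fin W → ℝ) (he : Monotone e)
    (U : ℝ)
    (p : Fin W → ℝ)
    (hfeas : (∀ i, 0 ≤ p i) ∧ ∑ i, p i = 1 ∧ ∑ i, p i ^ q * (e i - U) = 0)
    (hmax : ∀ p' : Fin W → ℝ,
      ((∀ i, 0 ≤ p' i) ∧ ∑ i, p' i = 1 ∧ ∑ i, p' i ^ q * (e i - U) = 0) →
        tsallisEntropy k q p' ≤ tsallisEntropy k q p)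
    (i j l : Fin W) (hij : i < j) (hjl : j < l)
    (hpi : 0 < p i) (hpl : 0 < p l) :
    0 < p j := by
  obtain ⟨s, t, hs, ht, hst, hej⟩ : e j ∈ segment ℝ (e i) (e l) := by
    rw [segment_eq_Icc (he (hij.trans hjl).le)]
    exact ⟨he hij.le, he hjl.le⟩
  by_contra hpj
  set D : Fin W → ℝ := Pi.single j 1 - s • Pi.single i 1 - t • Pi.single l 1
  have hD : ∀ f : Fin W → ℝ, ∑ n, D n * f n = f j - s * f i - t * f l :=
    sum_single_sub_smul_single_mul i j l s t
  have hfirst := sum_rpow_one_sub_mul_nonneg_of_isMaxOn hk hq0 hq1 hfeas (isMaxOn_iff.2 hmax)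
    (by simpa only [Pi.one_apply, mul_one, sub_sub, hst, sub_self] using hD 1)
    (by rw [hD]; simp only [smul_eq_mul] at hej; linarith) ?_
  · rw [hD, le_antisymm (not_lt.1 hpj) (hfeas.1 j), Real.zero_rpow (by linarith)] at hfirst
    have ha := Real.rpow_pos_of_pos hpi (1 - q)
    have hb := Real.rpow_pos_of_pos hpl (1 - q)
    -- `a b = b (s a) + a (t b) ≤ (a + b) (s a + t b)` for `a = p i ^ (1 - q)`, `b = p l ^ (1 - q)`
    nlinarith [mul_pos ha hb, mul_nonneg (mul_nonneg hs ha.le) ha.le,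
      mul_nonneg (mul_nonneg ht hb.le) hb.le]
  · intro n hn
    by_cases hni : n = i
    · exact hni ▸ hpi
    by_cases hnl : n = l
    · exact hnl ▸ hpl
    simp only [D, Pi.sub_apply, Pi.smul_apply, Pi.single_apply, hni, hnl, if_false, smul_zero,
      sub_zero] at hn
    split_ifs at hn <;> linarith
end

section
/- Let q, q' > 0 with q ≠ 1, E_1 ≤ … ≤ E_W real numbers (with E_1 ≤ 0 ≤ E_W), and suppose p̃ ∈ ℝ^W_{++} is a maximizer of S_q over the set {p ∈ ℝ^W_{++} : ∑ p_i = 1, ∑ p_i^{q'} E_i = 0}. Then there exists β ∈ ℝ such that, setting x̃_i = p̃_i^{q−1} / ∑_j p̃_j^q, one has x̃_i = 1 + (1−q) β E_i x̃_i^{(q'−1)/(q−1)} for all i, and ∑_{i=1}^W x̃_i^{1/(q−1)} (x̃_i − 1) = 0. -/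
/-!
On the open orthant the maximizer is a local maximum of `S_q` under the two smooth constraints
`∑ pᵢ = 1` and `∑ pᵢ^{q'} Eᵢ = 0`, so Lagrange's theorem gives
`p̃ᵢ^{q-1} = A + B p̃ᵢ^{q'-1} Eᵢ`. Multiplying by `p̃ᵢ` and summing, the constraints force
`A = ∑ p̃ⱼ^q`; dividing by it gives the fixed-point equation for the escort weights `x̃ᵢ`, with `β`
a rescaling of `B`. The identity `∑ x̃ᵢ^{1/(q-1)} (x̃ᵢ - 1) = 0` holds for every positive
probability vector, because `x̃ᵢ^{1/(q-1)}` is proportional to `p̃ᵢ`.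
-/

open Finset

open ContinuousLinearMap

section Gradients

variable {ι : Type*} [Fintype ι]

lemma hasStrictFDerivAt_sum_apply (p : ι → ℝ) :
    HasStrictFDerivAt (fun x : ι → ℝ => ∑ i, x i)
      (∑ i, (1 : ℝ) • proj (R := ℝ) (φ := fun _ : ι => ℝ) i) p := by
  simpa using HasStrictFDerivAt.fun_sum fun i (_ : i ∈ univ) =>
    hasStrictFDerivAt_apply (𝕜 := ℝ) i p

lemma hasStrictFDerivAt_sum_rpow_mul (c : ℝ) (w p : ι → ℝ) (hp : ∀ i, p i ≠ 0) :
    HasStrictFDerivAt (fun x : ι → ℝ => ∑ i, x i ^ c * w i)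
      (∑ i, (c * p i ^ (c - 1) * w i) • proj (R := ℝ) (φ := fun _ : ι => ℝ) i) p := by
  refine HasStrictFDerivAt.fun_sum fun i _ => ?_
  have h := ((Real.hasStrictDerivAt_rpow_const (p := c) (Or.inl (hp i))).comp_hasStrictFDerivAt p
    (hasStrictFDerivAt_apply (𝕜 := ℝ) i p)).mul_const (w i)
  rwa [smul_smul, mul_comm (w i)] at h

lemma hasStrictFDerivAt_tsallisEntropy (k q : ℝ) (p : ι → ℝ) (hp : ∀ i, p i ≠ 0) :
    HasStrictFDerivAt (tsallisEntropy k q)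
      (∑ i, (q * p i ^ (q - 1) * (k / (1 - q))) • proj (R := ℝ) (φ := fun _ : ι => ℝ) i) p := by
  have h := (hasStrictFDerivAt_sum_rpow_mul q (fun _ => k / (1 - q)) p hp).sub_const (k / (1 - q))
  have hS : tsallisEntropy k q = fun x : ι → ℝ => ∑ i, x i ^ q * (k / (1 - q)) - k / (1 - q) := by
    funext x
    rw [tsallisEntropy, ← sum_mul]
    ring
  rwa [hS]

lemma IsLocalExtrOn.exists_multipliers_of_hasStrictFDerivAt_gradient [DecidableEq ι]
    {κ : Type*} [Fintype κ] {f : κ → (ι → ℝ) → ℝ} {g : κ → ι → ℝ} {φ : (ι → ℝ) → ℝ}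
    {h p : ι → ℝ} (hextr : IsLocalExtrOn φ {x | ∀ k, f k x = f k p} p)
    (hf : ∀ k, HasStrictFDerivAt (f k) (∑ i, g k i • proj (R := ℝ) (φ := fun _ : ι => ℝ) i) p)
    (hφ : HasStrictFDerivAt φ (∑ i, h i • proj (R := ℝ) (φ := fun _ : ι => ℝ) i) p) :
    ∃ (Λ : κ → ℝ) (Λ₀ : ℝ), (Λ, Λ₀) ≠ 0 ∧ ∀ j, ∑ k, Λ k * g k j + Λ₀ * h j = 0 := by
  obtain ⟨Λ, Λ₀, hne, heq⟩ := hextr.exists_multipliers_of_hasStrictFDerivAt hf hφ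
  refine ⟨Λ, Λ₀, hne, fun j => ?_⟩
  simpa [Pi.single_apply] using congr($heq (Pi.single j 1))

lemma isLocalMaxOn_of_forall_pos_le {φ : (ι → ℝ) → ℝ} {s : Set (ι → ℝ)} {p : ι → ℝ}
    (hp : ∀ i, 0 < p i) (hmax : ∀ x ∈ s, (∀ i, 0 < x i) → φ x ≤ φ p) :
    IsLocalMaxOn φ s p := by
  have hopen : {x : ι → ℝ | ∀ i, 0 < x i} ∈ nhds p := by
    simpa [Set.pi, Set.mem_ofPred_eq] using
      (isOpen_set_pi Set.finite_univ fun _ _ => isOpen_Ioi).mem_nhds (by simpa using hp)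
  filter_upwards [nhdsWithin_le_nhds hopen, self_mem_nhdsWithin] with x hx hxs
  exact hmax x hxs hx

end Gradients

section Constraints

variable {ι : Type*} [Fintype ι] {p E : ι → ℝ}

lemma sum_mul_add_mul_rpow_sub_one_mul {r : ℝ} (hp : ∀ i, 0 < p i) (hsum : ∑ i, p i = 1)
    (hcon : ∑ i, p i ^ r * E i = 0) (a b : ℝ) :
    ∑ i, p i * (a + b * (p i ^ (r - 1) * E i)) = a := by
  have h : ∀ i, p i * (a + b * (p i ^ (r - 1) * E i)) = a * p i + b * (p i ^ r * E i) := by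
    intro i
    rw [Real.rpow_sub_one (hp i).ne']
    field_simp [(hp i).ne']
  simp only [h, sum_add_distrib, ← mul_sum, hsum, hcon]
  ring

lemma eq_sum_rpow_of_rpow_sub_one_eq {q r A B : ℝ} (hp : ∀ i, 0 < p i) (hsum : ∑ i, p i = 1)
    (hcon : ∑ i, p i ^ r * E i = 0) (hAB : ∀ i, p i ^ (q - 1) = A + B * (p i ^ (r - 1) * E i)) :
    A = ∑ i, p i ^ q := by
  rw [← sum_mul_add_mul_rpow_sub_one_mul hp hsum hcon A B]
  refine sum_congr rfl fun i _ => ?_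
  rw [← hAB i, Real.rpow_sub_one (hp i).ne', mul_div_cancel₀ _ (hp i).ne']

lemma exists_rpow_sub_one_eq_of_isLocalExtrOn_sum {k q : ℝ} (hk : k ≠ 0) (hq : q ≠ 0)
    (hq1 : q ≠ 1) (hp : ∀ i, 0 < p i) (hsum : ∑ i, p i = 1)
    (hextr : IsLocalExtrOn (tsallisEntropy k q) {x | ∑ i, x i = ∑ i, p i} p) :
    ∃ A : ℝ, ∀ i, p i ^ (q - 1) = A := by
  classical
  obtain ⟨Λ, Λ₀, hne, hΛ⟩ :=
    IsLocalExtrOn.exists_multipliers_of_hasStrictFDerivAt_gradient (κ := Unit)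
      (f := fun _ x => ∑ i, x i) (g := fun _ _ => 1) (by simpa using hextr)
      (fun _ => hasStrictFDerivAt_sum_apply p)
      (hasStrictFDerivAt_tsallisEntropy k q p fun i => (hp i).ne')
  have hc : q * (k / (1 - q)) ≠ 0 := mul_ne_zero hq (div_ne_zero hk (sub_ne_zero.2 hq1.symm))
  have hΛ₀ : Λ₀ ≠ 0 := by
    rintro rfl
    obtain ⟨j⟩ : Nonempty ι :=
      univ_nonempty_iff.mp (nonempty_of_sum_ne_zero (hsum ▸ one_ne_zero))
    have hΛu : Λ () = 0 := by simpa using hΛ j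
    exact hne (by simp [Prod.ext_iff, funext_iff, hΛu])
  refine ⟨-Λ () / (Λ₀ * (q * (k / (1 - q)))), fun i => ?_⟩
  have h := hΛ i
  simp only [Fintype.sum_unique, mul_one] at h
  rw [eq_div_iff (mul_ne_zero hΛ₀ hc)]
  linear_combination h

lemma exists_rpow_sub_one_eq_of_isLocalExtrOn_sum_sum_rpow {k q q' : ℝ} (hk : k ≠ 0)
    (hq : q ≠ 0) (hq1 : q ≠ 1) (hp : ∀ i, 0 < p i) (hsum : ∑ i, p i = 1)
    (hcon : ∑ i, p i ^ q' * E i = 0) (hE : ∃ i, q' * E i ≠ 0)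
    (hextr : IsLocalExtrOn (tsallisEntropy k q)
      {x | ∑ i, x i = ∑ i, p i ∧ ∑ i, x i ^ q' * E i = ∑ i, p i ^ q' * E i} p) :
    ∃ A B : ℝ, ∀ i, p i ^ (q - 1) = A + B * (p i ^ (q' - 1) * E i) := by
  classical
  obtain ⟨Λ, Λ₀, hne, hΛ⟩ :=
    IsLocalExtrOn.exists_multipliers_of_hasStrictFDerivAt_gradient
      (f := ![fun x => ∑ i, x i, fun x => ∑ i, x i ^ q' * E i])
      (g := ![fun _ => 1, fun i => q' * p i ^ (q' - 1) * E i])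
      (by simpa [Fin.forall_fin_two] using hextr)
      (Fin.forall_fin_two.2 ⟨by simpa using hasStrictFDerivAt_sum_apply p,
        by simpa using hasStrictFDerivAt_sum_rpow_mul q' E p fun i => (hp i).ne'⟩)
      (hasStrictFDerivAt_tsallisEntropy k q p fun i => (hp i).ne')
  simp only [Fin.sum_univ_two, Matrix.cons_val_zero, Matrix.cons_val_one] at hΛ
  have hc : q * (k / (1 - q)) ≠ 0 := mul_ne_zero hq (div_ne_zero hk (sub_ne_zero.2 hq1.symm))
  -- The constraints make the gradients `1` and `(q' pᵢ^{q'-1} Eᵢ)` independent, so `Λ₀ ≠ 0`.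
  have hΛ₀ : Λ₀ ≠ 0 := by
    rintro rfl
    have hΛ0 : Λ 0 = 0 := by
      rw [← sum_mul_add_mul_rpow_sub_one_mul hp hsum hcon (Λ 0) (Λ 1 * q')]
      exact sum_eq_zero fun j _ => by linear_combination p j * hΛ j
    obtain ⟨i, hi⟩ := hE
    have hΛ1 : Λ 1 = 0 := by
      have h : Λ 1 * ((q' * E i) * p i ^ (q' - 1)) = 0 := by linear_combination hΛ i - hΛ0
      simpa [hi, (Real.rpow_pos_of_pos (hp i) _).ne'] using h
    exact hne (by simp [Prod.ext_iff, funext_iff, Fin.forall_fin_two, hΛ0, hΛ1])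
  refine ⟨-Λ 0 / (Λ₀ * (q * (k / (1 - q)))), -(Λ 1 * q') / (Λ₀ * (q * (k / (1 - q)))),
    fun i => ?_⟩
  rw [div_mul_eq_mul_div, ← add_div, eq_div_iff (mul_ne_zero hΛ₀ hc)]
  linear_combination hΛ i

lemma exists_rpow_sub_one_eq_of_forall_tsallisEntropy_le {k q q' : ℝ} (hk : k ≠ 0)
    (hq : q ≠ 0) (hq1 : q ≠ 1) (hp : ∀ i, 0 < p i) (hsum : ∑ i, p i = 1)
    (hcon : ∑ i, p i ^ q' * E i = 0)
    (hmax : ∀ x : ι → ℝ, (∀ i, 0 < x i) → ∑ i, x i = 1 →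
      ∑ i, x i ^ q' * E i = 0 → tsallisEntropy k q x ≤ tsallisEntropy k q p) :
    ∃ A B : ℝ, ∀ i, p i ^ (q - 1) = A + B * (p i ^ (q' - 1) * E i) := by
  -- If every `q' Eᵢ` vanishes, the energy constraint is constant and only `∑ pᵢ = 1` binds.
  by_cases hE : ∃ i, q' * E i ≠ 0
  · refine exists_rpow_sub_one_eq_of_isLocalExtrOn_sum_sum_rpow hk hq hq1 hp hsum hcon hE
      (.inr <| isLocalMaxOn_of_forall_pos_le hp fun x hx hx0 => ?_)
    exact hmax x hx0 (hx.1.trans hsum) (hx.2.trans hcon)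
  · push Not at hE
    have hconst (x : ι → ℝ) : ∑ i, x i ^ q' * E i = ∑ i, p i ^ q' * E i :=
      sum_congr rfl fun i _ => by rcases mul_eq_zero.1 (hE i) with h | h <;> simp [h]
    obtain ⟨A, hA⟩ := exists_rpow_sub_one_eq_of_isLocalExtrOn_sum hk hq hq1 hp hsum
      (.inr <| isLocalMaxOn_of_forall_pos_le hp fun x hx hx0 =>
        hmax x hx0 (hx.trans hsum) ((hconst x).trans hcon))
    exact ⟨A, 0, by simpa using hA⟩

end Constraints

lemma Real.rpow_div_rpow_div {x S a : ℝ} (hx : 0 ≤ x) (hS : 0 ≤ S) (ha : a ≠ 0) (b : ℝ) :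
    (x ^ a / S) ^ (b / a) = x ^ b / S ^ (b / a) := by
  rw [Real.div_rpow (Real.rpow_nonneg hx _) hS, ← Real.rpow_mul hx, mul_div_cancel₀ _ ha]

section Escort

variable {ι : Type*} {p E : ι → ℝ} {q : ℝ}

lemma exists_escort_eq_one_add {q' S B : ℝ} (hq1 : q ≠ 1) (hp : ∀ i, 0 < p i) (hS : 0 < S)
    (hB : ∀ i, p i ^ (q - 1) = S + B * (p i ^ (q' - 1) * E i)) :
    ∃ β : ℝ, ∀ i, p i ^ (q - 1) / S =
      1 + (1 - q) * β * E i * (p i ^ (q - 1) / S) ^ ((q' - 1) / (q - 1)) := by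
  have h1q : 1 - q ≠ 0 := sub_ne_zero.2 hq1.symm
  have hSr : S ^ ((q' - 1) / (q - 1)) ≠ 0 := (Real.rpow_pos_of_pos hS _).ne'
  refine ⟨B * S ^ ((q' - 1) / (q - 1)) / (S * (1 - q)), fun i => ?_⟩
  rw [Real.rpow_div_rpow_div (hp i).le hS.le (sub_ne_zero.2 hq1), hB i]
  field_simp

lemma sum_rpow_pos_of_sum_eq_one [Fintype ι] (hp : ∀ i, 0 < p i) (hsum : ∑ i, p i = 1) :
    0 < ∑ i, p i ^ q :=
  sum_pos (fun i _ => Real.rpow_pos_of_pos (hp i) q) (nonempty_of_sum_ne_zero (hsum ▸ one_ne_zero))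

lemma sum_escort_rpow_mul_sub_one [Fintype ι] (hq1 : q ≠ 1) (hp : ∀ i, 0 < p i)
    (hsum : ∑ i, p i = 1) :
    ∑ i, (p i ^ (q - 1) / ∑ j, p j ^ q) ^ ((1 : ℝ) / (q - 1)) *
      ((p i ^ (q - 1) / ∑ j, p j ^ q) - 1) = 0 := by
  set S := ∑ j, p j ^ q
  have hS : 0 < S := sum_rpow_pos_of_sum_eq_one hp hsum
  have hterm (i : ι) : (p i ^ (q - 1) / S) ^ ((1 : ℝ) / (q - 1)) * (p i ^ (q - 1) / S - 1) =
      (p i ^ q / S - p i) / S ^ ((1 : ℝ) / (q - 1)) := by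
    rw [Real.rpow_div_rpow_div (hp i).le hS.le (sub_ne_zero.2 hq1), Real.rpow_one,
      Real.rpow_sub_one (hp i).ne']
    have := (hp i).ne'
    field_simp
  rw [sum_congr rfl fun i _ => hterm i, ← sum_div, sum_sub_distrib, ← sum_div, hsum,
    div_self hS.ne', sub_self, zero_div]

end Escort

theorem first_order_conditions (W : ℕ) (k q q' : ℝ)
    (hk : 0 < k) (hq : 0 < q) (hq1 : q ≠ 1)
    (E : Fin W → ℝ)
    (p : Fin W → ℝ) (hp : ∀ i, 0 < p i)
    (hsum : ∑ i, p i = 1) (hcon : ∑ i, p i ^ q' * E i = 0)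
    (hmax : ∀ p' : Fin W → ℝ, (∀ i, 0 < p' i) → ∑ i, p' i = 1 →
      ∑ i, p' i ^ q' * E i = 0 → tsallisEntropy k q p' ≤ tsallisEntropy k q p) :
    ∃ β : ℝ,
      (∀ i, (p i ^ (q - 1) / ∑ j, p j ^ q) =
        1 + (1 - q) * β * E i * (p i ^ (q - 1) / ∑ j, p j ^ q) ^ ((q' - 1) / (q - 1))) ∧
      ∑ i, (p i ^ (q - 1) / ∑ j, p j ^ q) ^ ((1 : ℝ) / (q - 1)) *
          ((p i ^ (q - 1) / ∑ j, p j ^ q) - 1) = 0 := by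
  obtain ⟨A, B, hAB⟩ := exists_rpow_sub_one_eq_of_forall_tsallisEntropy_le hk.ne' hq.ne' hq1
    hp hsum hcon hmax
  obtain rfl := eq_sum_rpow_of_rpow_sub_one_eq hp hsum hcon hAB
  obtain ⟨β, hβ⟩ := exists_escort_eq_one_add hq1 hp (sum_rpow_pos_of_sum_eq_one hp hsum) hAB
  exact ⟨β, hβ, sum_escort_rpow_mul_sub_one hq1 hp hsum⟩
end

section
/- Let q ∈ (0,1), 0 = e_1 ≤ … ≤ e_W with e_W > 0, U ∈ (0, e_W), and β such that 1 + (q−1)β(e_i − U) > 0 for all i and ∑_i exp_{2−q}(−β(e_i−U)) e_i = U ∑_i exp_{2−q}(−β(e_i−U)). Define g_{q,1}(β,U) = ∑_{i=1}^W exp_{2−q}(−β(e_i−U))^q. Then the partial derivative of g_{q,1} with respect to U at (β,U) equals qβ · g_{q,1}(β,U), i.e., ∂g_{q,1}/∂U (β,U) = qβ ∑_{i=1}^W exp_{2−q}(−β(e_i−U)) = qβ g_{q,1}(β,U). -/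
/-!
On the domain `1 + (q - 1) z > 0` we have `exp_{2-q}(z) = (1 + (q - 1) z) ^ (1 / (q - 1))`, so
`exp_{2-q}(z) ^ q = (1 + (q - 1) z) ^ (q / (q - 1))` has derivative `q exp_{2-q}(z)`. Moreover
`exp_{2-q}(z) ^ q = exp_{2-q}(z) (1 + (q - 1) z)`; summed over `z = -β (e_i - U)`, the correction
term is `(1 - q) β (∑ w_i e_i - U ∑ w_i)`, which the normalization condition kills.
-/

open Finset

/-- The q-exponential `exp_r(z) = [1 + (1−r)z]_+^{1/(1−r)}`. -/
noncomputable def qexp (r z : ℝ) : ℝ := (max 0 (1 + (1 - r) * z)) ^ ((1 : ℝ) / (1 - r))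

section QExp

variable {q z : ℝ}

lemma qexp_two_sub_eq_rpow (h : 0 < 1 + (q - 1) * z) :
    qexp (2 - q) z = (1 + (q - 1) * z) ^ (1 / (q - 1)) := by
  rw [qexp, show (1 : ℝ) - (2 - q) = q - 1 by ring, max_eq_right h.le]

lemma qexp_two_sub_rpow_self (hq : q ≠ 1) (h : 0 < 1 + (q - 1) * z) :
    qexp (2 - q) z ^ q = (1 + (q - 1) * z) ^ (q / (q - 1)) := by
  have hq' : q - 1 ≠ 0 := sub_ne_zero.mpr hq
  rw [qexp_two_sub_eq_rpow h, ← Real.rpow_mul h.le]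
  field_simp

lemma qexp_two_sub_rpow_self_eq_mul (hq : q ≠ 1) (h : 0 < 1 + (q - 1) * z) :
    qexp (2 - q) z ^ q = qexp (2 - q) z * (1 + (q - 1) * z) := by
  have hq' : q - 1 ≠ 0 := sub_ne_zero.mpr hq
  rw [qexp_two_sub_rpow_self hq h, qexp_two_sub_eq_rpow h, ← Real.rpow_add_one h.ne']
  congr 1
  field_simp
  ring

lemma hasDerivAt_qexp_two_sub_rpow_self (hq : q ≠ 1) (h : 0 < 1 + (q - 1) * z) :
    HasDerivAt (fun w => qexp (2 - q) w ^ q) (q * qexp (2 - q) z) z := by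
  have hq' : q - 1 ≠ 0 := sub_ne_zero.mpr hq
  have hlin : HasDerivAt (fun w => 1 + (q - 1) * w) (q - 1) z := by
    simpa using ((hasDerivAt_id z).const_mul (q - 1)).const_add 1
  have hdom : ∀ᶠ w in nhds z, 0 < 1 + (q - 1) * w :=
    hlin.continuousAt.eventually (lt_mem_nhds h)
  refine ((hlin.rpow_const (p := q / (q - 1)) (Or.inl h.ne')).congr_deriv ?_).congr_of_eventuallyEq
    (hdom.mono fun w hw => qexp_two_sub_rpow_self hq hw)
  rw [qexp_two_sub_eq_rpow h, show q / (q - 1) - 1 = 1 / (q - 1) by field_simp; ring]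
  field_simp

end QExp

section QExpSum

variable {ι : Type*} [Fintype ι] {q β U : ℝ} {e : ι → ℝ}

lemma sum_qexp_two_sub_rpow_self_eq_sum (hq : q ≠ 1)
    (hdom : ∀ i, 0 < 1 + (q - 1) * -(β * (e i - U)))
    (hnorm : ∑ i, qexp (2 - q) (-(β * (e i - U))) * e i =
      U * ∑ i, qexp (2 - q) (-(β * (e i - U)))) :
    ∑ i, qexp (2 - q) (-(β * (e i - U))) ^ q = ∑ i, qexp (2 - q) (-(β * (e i - U))) := by
  have hsplit : ∀ i, qexp (2 - q) (-(β * (e i - U))) ^ q =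
      qexp (2 - q) (-(β * (e i - U))) + (1 - q) * β * (qexp (2 - q) (-(β * (e i - U))) * e i) -
        (1 - q) * β * U * qexp (2 - q) (-(β * (e i - U))) := fun i => by
    rw [qexp_two_sub_rpow_self_eq_mul hq (hdom i)]
    ring
  simp only [hsplit, sum_sub_distrib, sum_add_distrib, ← mul_sum]
  rw [hnorm]
  ring

lemma hasDerivAt_sum_qexp_two_sub_rpow_self (hq : q ≠ 1)
    (hdom : ∀ i, 0 < 1 + (q - 1) * -(β * (e i - U))) :
    HasDerivAt (fun u => ∑ i, qexp (2 - q) (-(β * (e i - u))) ^ q)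
      (q * β * ∑ i, qexp (2 - q) (-(β * (e i - U)))) U := by
  have hterm : ∀ i, HasDerivAt (fun u => qexp (2 - q) (-(β * (e i - u))) ^ q)
      (q * qexp (2 - q) (-(β * (e i - U))) * β) U := fun i =>
    (hasDerivAt_qexp_two_sub_rpow_self hq (hdom i)).comp (h := fun u => -(β * (e i - u))) U
      (by simpa using (((hasDerivAt_id U).const_sub (e i)).const_mul β).fun_neg)
  refine (HasDerivAt.fun_sum fun i _ => hterm i).congr_deriv ?_
  rw [mul_sum]
  exact sum_congr rfl fun i _ => by ring

end QExpSum

theorem deriv_g_linear_case (W : ℕ)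
    (q : ℝ) (hq1 : q < 1)
    (e : Fin W → ℝ)
    (U : ℝ)
    (β : ℝ)
    (hpos : ∀ i, 0 < 1 + (1 - q) * β * (e i - U))
    (hnorm : ∑ i, qexp (2 - q) (-(β * (e i - U))) * e i =
      U * ∑ i, qexp (2 - q) (-(β * (e i - U)))) :
    HasDerivAt (fun u : ℝ => ∑ i, qexp (2 - q) (-(β * (e i - u))) ^ q)
      (q * β * ∑ i, qexp (2 - q) (-(β * (e i - U)))) U ∧
    q * β * ∑ i, qexp (2 - q) (-(β * (e i - U))) =
      q * β * ∑ i, qexp (2 - q) (-(β * (e i - U))) ^ q := by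
  have hq : q ≠ 1 := hq1.ne
  have hdom : ∀ i, 0 < 1 + (q - 1) * -(β * (e i - U)) := fun i => by linarith [hpos i]
  exact ⟨hasDerivAt_sum_qexp_two_sub_rpow_self hq hdom,
    by rw [sum_qexp_two_sub_rpow_self_eq_sum hq hdom hnorm]⟩
end
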